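/- Let q ≥ 2 be an integer and let λ ∈ {0, 1, …, q−1}. Then for every natural number a, u_q(aq + λ) = q·u_q(a) + (λ + 1 − q)·w_q(a) + q·a(a+1)/2 + (λ + 1 − q)·a. -/

import Mathlib

/-- `vq q n` is the `q`-adic valuation: `0` if `n = 0`, and otherwise the
largest `k` such that `q ^ k` divides `n`. -/
noncomputable def vq (q n : ℕ) : ℕ := if n = 0 then 0 else sSup {k : ℕ | q ^ k ∣ n}

/-- `wq q n = ∑_{i=0}^n vq q i`. -/
noncomputable def wq (q n : ℕ) : ℕ := ∑ i ∈ Finset.range (n + 1), vq q i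

/-- `uq q n = ∑_{i=0}^n wq q i`. -/
noncomputable def uq (q n : ℕ) : ℕ := ∑ i ∈ Finset.range (n + 1), wq q i

/-!
Only multiples of `q` have positive valuation, and `v_q(j q) = v_q(j) + 1`, so
`w_q(a q + r) = w_q(a) + a` for every digit `r < q`. Cutting the sum defining `u_q(a q + λ)`
into the `a` complete blocks `[j q, j q + q)` and the partial block `[a q, a q + λ]`,
on each of which `w_q` is constant, gives the formula.
-/

open Finset

theorem Finset.sum_range_mul_eq_sum_sum {M : Type*} [AddCommMonoid M] (f : ℕ → M) (a q : ℕ) :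
    ∑ i ∈ range (a * q), f i = ∑ j ∈ range a, ∑ r ∈ range q, f (j * q + r) := by
  induction a with
  | zero => simp
  | succ a ih => rw [Nat.succ_mul, sum_range_add, ih, sum_range_succ]

theorem vq_eq_padicValNat {q : ℕ} (hq : q ≠ 1) (n : ℕ) : vq q n = padicValNat q n := by
  rcases eq_or_ne n 0 with rfl | hn
  · simp [vq]
  have hset : {k : ℕ | q ^ k ∣ n} = Set.Iic (padicValNat q n) :=
    Set.ext fun _ => Nat.pow_dvd_iff_le_padicValNat hq hn
  rw [vq, if_neg hn, hset, csSup_Iic]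

theorem wq_succ (q n : ℕ) : wq q (n + 1) = wq q n + vq q (n + 1) :=
  sum_range_succ _ _

theorem wq_mul_add_of_lt {q : ℕ} (hq : 1 < q) (a : ℕ) {r : ℕ} (hr : r < q) :
    wq q (a * q + r) = wq q (a * q) := by
  induction r with
  | zero => rfl
  | succ r ih =>
    have hndvd : ¬ q ∣ a * q + (r + 1) := by
      rw [Nat.dvd_add_right (dvd_mul_left q a)]
      exact Nat.not_dvd_of_pos_of_lt r.succ_pos hr
    rw [← add_assoc, wq_succ, ih (by omega), add_assoc, vq_eq_padicValNat hq.ne',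
      padicValNat.eq_zero_of_not_dvd hndvd, add_zero]

theorem wq_mul {q : ℕ} (hq : 1 < q) (a : ℕ) : wq q (a * q) = wq q a + a := by
  induction a with
  | zero => simp [wq, vq]
  | succ a ih =>
    have hsplit : (a + 1) * q = a * q + (q - 1) + 1 := by
      rw [Nat.succ_mul]; omega
    have hval : vq q ((a + 1) * q) = vq q (a + 1) + 1 := by
      rw [vq_eq_padicValNat hq.ne', vq_eq_padicValNat hq.ne', mul_comm,
        padicValNat_base_mul hq a.succ_ne_zero]
    rw [hsplit, wq_succ, wq_mul_add_of_lt hq a (by omega), ih, ← hsplit, hval, wq_succ]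
    omega

theorem wq_mul_add {q : ℕ} (hq : 1 < q) (a : ℕ) {r : ℕ} (hr : r < q) :
    wq q (a * q + r) = wq q a + a := by
  rw [wq_mul_add_of_lt hq a hr, wq_mul hq]

theorem uq_mul_add {q : ℕ} (hq : 1 < q) (a : ℕ) {lam : ℕ} (hlam : lam < q) :
    uq q (a * q + lam) = q * ∑ j ∈ range a, (wq q j + j) + (lam + 1) * (wq q a + a) := by
  have hblock : ∀ j ∈ range a, ∑ r ∈ range q, wq q (j * q + r) = q * (wq q j + j) := by
    intro j _
    rw [sum_congr rfl fun r hr => wq_mul_add hq j (mem_range.1 hr), sum_const, card_range,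
      smul_eq_mul]
  have htail : ∀ r ∈ range (lam + 1), wq q (a * q + r) = wq q a + a :=
    fun r hr => wq_mul_add hq a (by rw [mem_range] at hr; omega)
  rw [uq, add_assoc, sum_range_add, sum_range_mul_eq_sum_sum, sum_congr rfl hblock, ← mul_sum,
    sum_congr rfl htail, sum_const, card_range, smul_eq_mul]

theorem stmt_2 (q : ℕ) (hq : 2 ≤ q) (lam : ℕ) (hlam : lam < q) (a : ℕ) :
    (uq q (a * q + lam) : ℤ) =
      (q : ℤ) * uq q a + ((lam : ℤ) + 1 - q) * wq q a
        + (q : ℤ) * (a * (a + 1) / 2 : ℕ) + ((lam : ℤ) + 1 - q) * a := by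
  have huq : uq q a = ∑ j ∈ range a, wq q j + wq q a := sum_range_succ _ _
  have htri : a * (a + 1) / 2 = ∑ j ∈ range a, j + a := by
    rw [← sum_range_succ (fun j => j), sum_range_id, Nat.add_sub_cancel, mul_comm]
  rw [uq_mul_add (by omega) a hlam, huq, htri]
  push_cast [sum_add_distrib]
  ring
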